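/- arXiv:2407.13521 — 6 statements merged into one kernel-verified Lean document; each statement's English description precedes it below -/
import Mathlib

section
/- Let q be a prime power. In the polynomial ring F_q[X,Y], the congruence X^{q²} − X ≡ X((Y^q + Y)^{q−1} − 1) + X^{q+1} − Y^q − Y holds modulo the ideal generated by X^{q+1} − Y^q − Y. -/
open MvPolynomial

theorem stmt_2 (q : ℕ) (hq : IsPrimePow q)
    (F : Type*) [Field F] [Fintype F] (hF : Fintype.card F = q) :
    (X 0 ^ (q ^ 2) - X 0)
      - (X 0 * ((X 1 ^ q + X 1) ^ (q - 1) - 1) + X 0 ^ (q + 1) - X 1 ^ q - X 1)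
      ∈ Ideal.span {(X 0 ^ (q + 1) - X 1 ^ q - X 1 : MvPolynomial (Fin 2) F)} := by
  obtain ⟨k, rfl⟩ : ∃ k, q = k + 2 := ⟨q - 2, by have := hq.two_le; omega⟩
  rw [Ideal.mem_span_singleton]
  have hd : (X 0 ^ (k + 2 + 1) - X 1 ^ (k + 2) - X 1 : MvPolynomial (Fin 2) F) ∣
      (X 0 ^ (k + 2 + 1)) ^ (k + 2 - 1) - (X 1 ^ (k + 2) + X 1) ^ (k + 2 - 1) := by
    have h1 : (X 0 ^ (k + 2 + 1) - X 1 ^ (k + 2) - X 1 : MvPolynomial (Fin 2) F)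
        = X 0 ^ (k + 2 + 1) - (X 1 ^ (k + 2) + X 1) := by ring
    rw [h1]
    exact sub_dvd_pow_sub_pow _ _ _
  obtain ⟨c, hc⟩ := hd
  have hpow : (X 0 : MvPolynomial (Fin 2) F) ^ ((k + 2) ^ 2)
      = X 0 * (X 0 ^ (k + 2 + 1)) ^ (k + 2 - 1) := by
    rw [← pow_mul, ← pow_succ']
    have h2 : k + 2 - 1 = k + 1 := by omega
    rw [h2]; congr 1; ring
  refine ⟨X 0 * c - 1, ?_⟩
  rw [hpow]
  linear_combination (X 0 : MvPolynomial (Fin 2) F) * hc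
end

section
/- Let q be a prime power, α ∈ F_{q²} with α ≠ 0, and d ≥ 1. The polynomial f(t) = α^{q+1} t^{d(q+1)} + t^{q+1} + 1 has d(q+1) distinct roots in F_{q²} if and only if the polynomial g(t) = α^{q+1} t^d + t + 1 (which has coefficients in F_q) has d distinct roots in F_q. -/
open Finset Polynomial

/-- In a finite field, if `m ∣ card F - 1` then there are exactly `m` -th roots of unity. -/
lemma unity_count (F : Type*) [Field F] [Fintype F] [DecidableEq F] {m : ℕ} (hm : 0 < m)
    (hdvd : m ∣ Fintype.card F - 1) :
    (Finset.univ.filter fun x : F => x ^ m = 1).card = m := by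
  obtain ⟨g, hg⟩ := IsCyclic.exists_ofOrder_eq_natCard (α := Fˣ)
  have hn : orderOf g = Fintype.card F - 1 := by
    rw [hg, Nat.card_eq_fintype_card, Fintype.card_units]
  have h2 : 1 < Fintype.card F := Fintype.one_lt_card
  have hne : orderOf g ≠ 0 := by omega
  have hdvd' : m ∣ orderOf g := by rw [hn]; exact hdvd
  have hζu : orderOf (g ^ (orderOf g / m)) = m := orderOf_pow_orderOf_div hne hdvd'
  set ζ : F := ((g ^ (orderOf g / m) : Fˣ) : F) with hζdef
  have hoζ : orderOf ζ = m := by rw [hζdef, orderOf_units, hζu]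
  have hζ : IsPrimitiveRoot ζ m := hoζ ▸ IsPrimitiveRoot.orderOf ζ
  have hcard := hζ.card_nthRootsFinset
  have heq : (Finset.univ.filter fun x : F => x ^ m = 1) = nthRootsFinset m (1 : F) := by
    ext x
    simp [Polynomial.mem_nthRootsFinset hm]
  rw [heq, hcard]

/-- Fibers of the norm map `t ↦ t^(q+1)` over nonzero elements of the ground field
have exactly `q+1` elements. -/
lemma fiber_count (F : Type*) [Field F] [Fintype F] [DecidableEq F] {q : ℕ} (h2q : 2 ≤ q)
    (hF : Fintype.card F = q ^ 2) {s : F} (hs0 : s ≠ 0) (hsq : s ^ q = s) :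
    (Finset.univ.filter fun t : F => t ^ (q + 1) = s).card = q + 1 := by
  have hq2 : (q + 1) * (q - 1) + 1 = q ^ 2 := by
    obtain ⟨k, rfl⟩ : ∃ k, q = k + 1 := ⟨q - 1, by omega⟩
    rw [Nat.add_sub_cancel]
    ring
  have hcard1 : Fintype.card F - 1 = (q + 1) * (q - 1) := by rw [hF]; omega
  -- roots of unity counts
  have hR : (Finset.univ.filter fun x : F => x ^ (q + 1) = 1).card = q + 1 :=
    unity_count F (by omega) (by rw [hcard1]; exact ⟨q - 1, rfl⟩)
  have hT : (Finset.univ.filter fun x : F => x ^ (q - 1) = 1).card = q - 1 :=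
    unity_count F (by omega) (by rw [hcard1]; exact ⟨q + 1, mul_comm _ _⟩)
  set T := Finset.univ.filter fun x : F => x ^ (q - 1) = 1 with hTdef
  set U := (Finset.univ : Finset F).erase 0 with hUdef
  have hUcard : U.card = Fintype.card F - 1 := by
    rw [hUdef, Finset.card_erase_of_mem (Finset.mem_univ _), Finset.card_univ]
  -- every nonzero t maps into T
  have hmaps : ∀ t ∈ U, t ^ (q + 1) ∈ T := by
    intro t ht
    have ht0 : t ≠ 0 := by simpa [hUdef] using ht
    have : t ^ (Fintype.card F - 1) = 1 := FiniteField.pow_card_sub_one_eq_one t ht0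
    rw [hTdef, Finset.mem_filter]
    refine ⟨Finset.mem_univ _, ?_⟩
    rw [← pow_mul, ← hcard1, this]
  have hsum := Finset.card_eq_sum_card_fiberwise hmaps
  -- each fiber has at most q+1 elements
  have hle : ∀ s' ∈ T, (U.filter fun t => t ^ (q + 1) = s').card ≤ q + 1 := by
    intro s' hs'
    have hs'1 : s' ^ (q - 1) = 1 := (Finset.mem_filter.mp hs').2
    have hs'0 : s' ≠ 0 := by
      intro h0
      rw [h0, zero_pow (by omega : q - 1 ≠ 0)] at hs'1
      exact zero_ne_one hs'1
    rcases (U.filter fun t => t ^ (q + 1) = s').eq_empty_or_nonempty with he | ⟨t0, ht0⟩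
    · simp only [he, Finset.card_empty]; omega
    · have ht0' := Finset.mem_filter.mp ht0
      have ht0ne : t0 ≠ 0 := (Finset.mem_erase.mp (hUdef ▸ ht0'.1)).1
      have ht0pow : t0 ^ (q + 1) = s' := ht0'.2
      have hinj : (U.filter fun t => t ^ (q + 1) = s').card
          ≤ (Finset.univ.filter fun x : F => x ^ (q + 1) = 1).card := by
        apply Finset.card_le_card_of_injOn (fun x => x * t0⁻¹)
        · intro x hx
          have hx' := (Finset.mem_filter.mp hx).2
          refine Finset.mem_filter.mpr ⟨Finset.mem_univ _, ?_⟩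
          rw [mul_pow, inv_pow, hx', ht0pow]
          exact mul_inv_cancel₀ hs'0
        · intro a _ b _ hab
          exact mul_right_cancel₀ (inv_ne_zero ht0ne) hab
      exact hinj.trans_eq hR
  -- the fibers are all exactly q+1
  have hfib : ∀ s' ∈ T, (U.filter fun t => t ^ (q + 1) = s').card = q + 1 := by
    intro s' hs'
    by_contra hne
    have hlt : (U.filter fun t => t ^ (q + 1) = s').card < q + 1 :=
      lt_of_le_of_ne (hle s' hs') hne
    have : (∑ b ∈ T, (U.filter fun t => t ^ (q + 1) = b).card) < ∑ _b ∈ T, (q + 1) :=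
      Finset.sum_lt_sum (fun i hi => hle i hi) ⟨s', hs', hlt⟩
    rw [← hsum, Finset.sum_const, smul_eq_mul, hT, hUcard, hcard1,
      mul_comm (q - 1) (q + 1)] at this
    exact lt_irrefl _ this
  -- now specialize to our s
  have hsT : s ∈ T := by
    rw [hTdef, Finset.mem_filter]
    refine ⟨Finset.mem_univ _, ?_⟩
    have : s ^ (q - 1) * s = s := by
      rw [← pow_succ]
      have : q - 1 + 1 = q := by omega
      rw [this, hsq]
    exact mul_right_cancel₀ hs0 (by rw [this, one_mul])
  have hzero : ∀ t : F, t ^ (q + 1) = s → t ≠ 0 := by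
    intro t ht h0
    rw [h0, zero_pow (by omega : q + 1 ≠ 0)] at ht
    exact hs0 ht.symm
  have : (Finset.univ.filter fun t : F => t ^ (q + 1) = s)
      = U.filter fun t => t ^ (q + 1) = s := by
    ext t
    simp only [Finset.mem_filter, hUdef, Finset.mem_erase, Finset.mem_univ, true_and]
    constructor
    · intro h; exact ⟨⟨hzero t h, trivial⟩, h⟩
    · intro h; exact h.2
  rw [this, hfib s hsT]

theorem stmt_4 (q : ℕ) (hq : IsPrimePow q)
    (F : Type*) [Field F] [Fintype F] (hF : Fintype.card F = q ^ 2)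
    (α : F) (hα : α ≠ 0) (d : ℕ) (hd : 1 ≤ d) :
    {t : F | α ^ (q + 1) * t ^ (d * (q + 1)) + t ^ (q + 1) + 1 = 0}.ncard = d * (q + 1)
      ↔ {t : F | t ^ q = t ∧ α ^ (q + 1) * t ^ d + t + 1 = 0}.ncard = d := by
  classical
  have h2q : 2 ≤ q := hq.two_le
  set A := Finset.univ.filter
    (fun t : F => t ^ q = t ∧ α ^ (q + 1) * t ^ d + t + 1 = 0) with hAdef
  set B := Finset.univ.filter
    (fun t : F => α ^ (q + 1) * t ^ (d * (q + 1)) + t ^ (q + 1) + 1 = 0) with hBdef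
  have hsetA : {t : F | t ^ q = t ∧ α ^ (q + 1) * t ^ d + t + 1 = 0} = ↑A := by
    ext t; simp [hAdef]
  have hsetB : {t : F | α ^ (q + 1) * t ^ (d * (q + 1)) + t ^ (q + 1) + 1 = 0} = ↑B := by
    ext t; simp [hBdef]
  rw [hsetA, hsetB, Set.ncard_coe_finset, Set.ncard_coe_finset]
  -- key: B.card = A.card * (q+1)
  have hpowcard : ∀ t : F, t ^ (q ^ 2) = t := by
    intro t; rw [← hF]; exact FiniteField.pow_card t
  have hmaps : ∀ t ∈ B, t ^ (q + 1) ∈ A := by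
    intro t ht
    rw [hBdef, Finset.mem_filter] at ht
    rw [hAdef, Finset.mem_filter]
    refine ⟨Finset.mem_univ _, ?_, ?_⟩
    · rw [← pow_mul]
      have h1 : (q + 1) * q = q ^ 2 + q := by ring
      rw [h1, pow_add, hpowcard t]
      rw [pow_succ, mul_comm]
    · rw [← pow_mul]
      have h2 : (q + 1) * d = d * (q + 1) := by ring
      rw [h2]
      exact ht.2
  have hkey := Finset.card_eq_sum_card_fiberwise hmaps
  have hfib : ∀ s ∈ A, (B.filter fun t => t ^ (q + 1) = s).card = q + 1 := by
    intro s hs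
    rw [hAdef, Finset.mem_filter] at hs
    obtain ⟨-, hsq, hgs⟩ := hs
    have hs0 : s ≠ 0 := by
      intro h0
      rw [h0, zero_pow (by omega : d ≠ 0), mul_zero, zero_add, zero_add] at hgs
      exact one_ne_zero hgs
    have heq : (B.filter fun t => t ^ (q + 1) = s)
        = Finset.univ.filter fun t : F => t ^ (q + 1) = s := by
      ext t
      simp only [Finset.mem_filter, hBdef, Finset.mem_univ, true_and]
      constructor
      · intro h; exact h.2
      · intro h
        refine ⟨?_, h⟩
        have : t ^ (d * (q + 1)) = s ^ d := by
          rw [mul_comm d, pow_mul, h]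
        rw [this, h]
        exact hgs
    rw [heq]
    exact fiber_count F h2q hF hs0 hsq
  have hBA : B.card = A.card * (q + 1) := by
    rw [hkey, Finset.sum_congr rfl hfib, Finset.sum_const, smul_eq_mul]
  rw [hBA]
  constructor
  · intro h
    exact Nat.eq_of_mul_eq_mul_right (by omega) h
  · intro h
    rw [h]
end

section
/- Let K be a field whose characteristic does not divide d(d−1), where d ≥ 2, and let A ∈ K with A ≠ 0. The polynomial A t^d + t + 1 ∈ K[t] has a repeated root (in an algebraic closure of K) if and only if A = (−1)^d (d−1)^{d−1} / d^d; moreover, in that case t = −d/(d−1) is a root of multiplicity exactly two. -/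
open Polynomial

private lemma aux1 {F : Type*} [Field F] (n : ℕ) (c e : F) (hc : c ≠ 0) (he : e ≠ 0)
    (hce : c - e = 1) :
    ((-1)^(n+2) * e^(n+1)/c^(n+2)) * (-c/e)^(n+2) + (-c/e) + 1 = 0 := by
  obtain ⟨s, hsdef⟩ : ∃ s : F, s = (-1)^n := ⟨_, rfl⟩
  have hs2 : s * s = 1 := by rw [hsdef, ← mul_pow]; norm_num
  have e1 : ((-1:F))^(n+2) = s := by rw [hsdef, pow_add]; norm_num
  have e2 : (-c/e)^(n+2) = s * (c^(n+2)/e^(n+2)) := by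
    rw [neg_div, neg_pow (c/e), div_pow, e1]
  rw [e1, e2]
  have t1 : s * e^(n+1)/c^(n+2) * (s * (c^(n+2)/e^(n+2))) = 1/e := by
    field_simp
    linear_combination e^(n+2)*hs2
  rw [t1]
  field_simp
  linear_combination -hce

private lemma aux2 {F : Type*} [Field F] (n : ℕ) (c e : F) (hc : c ≠ 0) (he : e ≠ 0) :
    ((-1)^(n+2) * e^(n+1)/c^(n+2)) * c * (-c/e)^(n+1) + 1 = 0 := by
  obtain ⟨s, hsdef⟩ : ∃ s : F, s = (-1)^n := ⟨_, rfl⟩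
  have hs2 : s * s = 1 := by rw [hsdef, ← mul_pow]; norm_num
  have e1 : ((-1:F))^(n+2) = s := by rw [hsdef, pow_add]; norm_num
  have e2 : (-c/e)^(n+1) = -s * (c^(n+1)/e^(n+1)) := by
    rw [neg_div, neg_pow (c/e), div_pow, pow_succ, hsdef]; ring
  rw [e1, e2]
  have t1 : s * e^(n+1)/c^(n+2) * c * (-s * (c^(n+1)/e^(n+1))) = -1 := by
    field_simp
    linear_combination (-c^(n+2))*hs2
  rw [t1]
  ring

theorem stmt_5 (K : Type*) [Field K] (d : ℕ) (hd : 2 ≤ d)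
    (hchar : ¬ (ringChar K ∣ d * (d - 1))) (A : K) (hA : A ≠ 0) :
    ((∃ x : AlgebraicClosure K,
        aeval x (C A * X ^ d + X + 1) = 0 ∧
        aeval x (derivative (C A * X ^ d + X + 1)) = 0)
      ↔ A = (-1) ^ d * ((d : K) - 1) ^ (d - 1) / (d : K) ^ d) ∧
    (A = (-1) ^ d * ((d : K) - 1) ^ (d - 1) / (d : K) ^ d →
      rootMultiplicity (-(d : K) / ((d : K) - 1)) (C A * X ^ d + X + 1) = 2) := by
  obtain ⟨n, rfl⟩ : ∃ n, d = n + 2 := ⟨d - 2, by omega⟩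
  set L := AlgebraicClosure K
  have hnz : ∀ m : ℕ, m ∣ (n+2)*(n+1) → (m : K) ≠ 0 := by
    intro m hm h0
    exact hchar (dvd_trans ((ringChar.spec K m).mp h0) (by simpa using hm))
  have hcast : ((n+2 : ℕ) : K) = (n : K) + 2 := by push_cast; ring
  have hecast : ((n+1 : ℕ) : K) = (n : K) + 1 := by push_cast; ring
  have hcK : ((n+2 : ℕ) : K) ≠ 0 := hnz (n+2) ⟨n+1, rfl⟩
  have hcK' : ((n : K) + 2) ≠ 0 := hcast ▸ hcK
  have heK : ((n+1 : ℕ) : K) ≠ 0 := hnz (n+1) (dvd_mul_left _ _)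
  have heK' : ((n : K) + 1) ≠ 0 := hecast ▸ heK
  have h2K : (2 : K) ≠ 0 := by
    have h := hnz 2 (by rw [mul_comm]; exact (Nat.even_mul_succ_self (n+1)).two_dvd)
    simpa using h
  have hsub : n + 2 - 1 = n + 1 := rfl
  have heq : ((n+2 : ℕ) : K) - 1 = (n : K) + 1 := by rw [hcast]; ring
  have hderiv : derivative (C A * X ^ (n+2) + X + 1 : K[X])
      = C (A * ((n+2 : ℕ) : K)) * X ^ (n+1) + 1 := by
    simp [derivative_X_pow]; ring_nf; rw [show (C (2:K)) = 2 from map_ofNat C 2]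
  have hderiv2 : derivative (C (A * ((n+2 : ℕ) : K)) * X ^ (n+1) + 1 : K[X])
      = C (A * ((n+2 : ℕ) : K) * ((n+1 : ℕ) : K)) * X ^ n := by
    simp [derivative_X_pow]; ring
  have hcL : ((n : L) + 2) ≠ 0 := by
    intro h; apply hcK'
    apply (algebraMap K L).injective
    simp only [map_add, map_natCast, map_ofNat, map_zero]
    exact h
  have heL : ((n : L) + 1) ≠ 0 := by
    intro h; apply heK'
    apply (algebraMap K L).injective
    simp only [map_add, map_natCast, map_one, map_zero]
    exact h
  constructor
  · constructor
    · rintro ⟨x, h1, h2⟩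
      rw [hderiv] at h2
      simp only [map_add, map_mul, map_one, aeval_C, aeval_X_pow, aeval_X, map_natCast] at h1 h2
      set a := algebraMap K L A with ha
      have h2' : a * ((n:L)+2) * x ^ (n+1) + 1 = 0 := by
        push_cast at h2 ⊢; linear_combination h2
      have h1' : a * x ^ (n+2) + x + 1 = 0 := h1
      have key : ((n:L)+1) * x = -((n:L)+2) := by
        rw [pow_succ] at h1'
        linear_combination ((n:L)+2) * h1' - x * h2'
      have h3 : a * ((n:L)+2) * (((n:L)+1) * x) ^ (n+1) = -((n:L)+1) ^ (n+1) := by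
        rw [mul_pow]
        linear_combination ((n:L)+1)^(n+1) * h2'
      rw [key] at h3
      obtain ⟨s, hsdef⟩ : ∃ s : L, s = (-1)^n := ⟨_, rfl⟩
      have hs2 : s * s = 1 := by rw [hsdef, ← mul_pow]; norm_num
      have e2 : (-((n:L)+2))^(n+1) = -s * (((n:L)+2)^(n+1)) := by
        rw [neg_pow (((n:L)+2)), pow_succ, hsdef]; ring
      rw [e2] at h3
      have e1 : ((-1:L))^(n+2) = s := by rw [hsdef, pow_add]; norm_num
      have final : a * ((n:L)+2)^(n+2) = (-1)^(n+2) * ((n:L)+1)^(n+1) := by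
        rw [e1]
        linear_combination (-s) * h3 - (a * ((n:L)+2)^(n+2)) * hs2
      rw [hsub, eq_div_iff (pow_ne_zero _ hcK)]
      apply (algebraMap K L).injective
      simp only [map_mul, map_pow, map_sub, map_neg, map_one, map_natCast]
      push_cast
      linear_combination final
    · intro hAval
      refine ⟨algebraMap K L (-((n+2:ℕ):K)/(((n+2:ℕ):K) - 1)), ?_, ?_⟩
      · simp only [map_add, map_mul, map_one, aeval_C, aeval_X_pow, aeval_X]
        rw [hAval, hsub]
        simp only [map_div₀, map_mul, map_pow, map_sub, map_neg, map_one, map_natCast]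
        push_cast
        have := aux1 n ((n:L)+2) ((n:L)+1) hcL heL (by ring)
        linear_combination this
      · rw [hderiv]
        simp only [map_add, map_mul, map_one, aeval_C, aeval_X_pow, aeval_X]
        rw [hAval, hsub]
        simp only [map_div₀, map_mul, map_pow, map_sub, map_neg, map_one, map_natCast]
        push_cast
        have := aux2 n ((n:L)+2) ((n:L)+1) hcL heL
        linear_combination this
  · intro hAval
    set P : K[X] := C A * X ^ (n+2) + X + 1 with hP
    have hPne : P ≠ 0 := by
      intro h
      have hco := congrArg (fun q => coeff q (n+2)) h
      simp only [hP, coeff_add, coeff_C_mul, coeff_X_pow, if_pos rfl, coeff_zero] at hco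
      rw [coeff_X, coeff_one] at hco
      simp at hco
      exact hA hco
    set c : K := ((n+2:ℕ) : K) with hc
    set x0 : K := -c/(c - 1) with hx0
    have hce : c - (c-1) = 1 := by ring
    have he1 : c - 1 ≠ 0 := by rw [hc, heq]; exact heK'
    have hx0ne : x0 ≠ 0 := by
      rw [hx0]; exact div_ne_zero (neg_ne_zero.mpr hcK) he1
    have hroot0 : P.IsRoot x0 := by
      rw [IsRoot, hP]
      simp only [eval_add, eval_mul, eval_C, eval_pow, eval_X, eval_one]
      rw [hAval, hsub]
      exact aux1 n c (c-1) hcK he1 hce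
    have hroot1 : (derivative P).IsRoot x0 := by
      rw [hP, hderiv, IsRoot]
      simp only [eval_add, eval_mul, eval_C, eval_pow, eval_X, eval_one]
      rw [hAval, hsub]
      exact aux2 n c (c-1) hcK he1
    have hnroot2 : ¬ (derivative (derivative P)).IsRoot x0 := by
      rw [hP, hderiv, hderiv2, IsRoot]
      simp only [eval_mul, eval_C, eval_pow, eval_X]
      exact mul_ne_zero (mul_ne_zero (mul_ne_zero hA hcK) heK) (pow_ne_zero _ hx0ne)
    have hgt : 1 < P.rootMultiplicity x0 :=
      (one_lt_rootMultiplicity_iff_isRoot hPne).mpr ⟨hroot0, hroot1⟩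
    have hle : ¬ 2 < P.rootMultiplicity x0 := by
      rw [lt_rootMultiplicity_iff_isRoot_iterate_derivative_of_mem_nonZeroDivisors hPne
        (mem_nonZeroDivisors_of_ne_zero (by norm_num [Nat.factorial]; exact h2K))]
      push_neg
      refine ⟨2, le_rfl, ?_⟩
      rw [show derivative^[2] P = derivative (derivative P) from rfl]
      exact hnroot2
    omega
end

section
/- Let K be a field, d ≥ 2, A ∈ K nonzero, and let T₁, T₂ ∈ K be two distinct roots of A t^d + t + 1. Set ρ = T₂/T₁. Then A = (−1)^d (ρ − 1)(ρ^d − ρ)^{d−1} / (ρ^d − 1)^d. -/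
theorem stmt_7 (K : Type*) [Field K] (d : ℕ) (hd : 2 ≤ d) (A : K) (hA : A ≠ 0)
    (T₁ T₂ : K) (h1 : A * T₁ ^ d + T₁ + 1 = 0) (h2 : A * T₂ ^ d + T₂ + 1 = 0)
    (hne : T₁ ≠ T₂) :
    A = (-1) ^ d * ((T₂ / T₁) - 1) * ((T₂ / T₁) ^ d - T₂ / T₁) ^ (d - 1)
          / ((T₂ / T₁) ^ d - 1) ^ d := by
  have hT1 : T₁ ≠ 0 := by
    rintro rfl
    have h : (1:K) = 0 := by simpa [zero_pow (by omega : d ≠ 0)] using h1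
    exact one_ne_zero h
  have hT2 : T₂ ≠ 0 := by
    rintro rfl
    have h : (1:K) = 0 := by simpa [zero_pow (by omega : d ≠ 0)] using h2
    exact one_ne_zero h
  have hsub : A * (T₂ ^ d - T₁ ^ d) = T₁ - T₂ := by linear_combination h2 - h1
  have hdne : T₂ ^ d - T₁ ^ d ≠ 0 := by
    intro h
    apply hne
    have h0 : T₁ - T₂ = 0 := by rw [← hsub, h, mul_zero]
    exact (sub_eq_zero.mp h0).symm ▸ rfl
  have hT : T₁ * T₂ ^ d - T₂ * T₁ ^ d = T₁ ^ d - T₂ ^ d := by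
    apply mul_left_cancel₀ hA
    linear_combination T₁ * h2 - T₂ * h1 - h1 + h2
  set ρ : K := T₂ / T₁ with hρ
  have hT1d : T₁ ^ d ≠ 0 := pow_ne_zero _ hT1
  have hr1 : T₁ * ρ = T₂ := by rw [hρ]; field_simp
  have hr2 : T₁ ^ d * ρ ^ d = T₂ ^ d := by rw [← mul_pow, hr1]
  have hρd1 : ρ ^ d - 1 ≠ 0 := by
    have hval : ρ ^ d - 1 = (T₂ ^ d - T₁ ^ d) / T₁ ^ d := by
      rw [hρ, div_pow]; field_simp
    rw [hval]
    exact div_ne_zero hdne hT1d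
  have h1d : T₁ ^ (d - 1) * T₁ = T₁ ^ d := by
    rw [← pow_succ]; congr 1; omega
  have e1 : T₁ * (ρ ^ d - ρ) = -(ρ ^ d - 1) := by
    apply mul_left_cancel₀ hT1d
    linear_combination (T₁ + 1) * hr2 - T₁ ^ d * hr1 + hT
  have e2 : A * T₁ ^ (d - 1) * (ρ ^ d - 1) = -(ρ - 1) := by
    apply mul_left_cancel₀ hT1
    linear_combination A * (ρ ^ d - 1) * h1d + A * hr2 + hsub + hr1
  have e1p : T₁ ^ (d-1) * (ρ ^ d - ρ) ^ (d-1) = (-1) ^ (d-1) * (ρ ^ d - 1) ^ (d-1) := by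
    rw [← mul_pow, e1, neg_eq_neg_one_mul, mul_pow]
  have key : A * (ρ ^ d - 1) ^ d = (-1) ^ d * (ρ - 1) * (ρ ^ d - ρ) ^ (d-1) := by
    have hdd : (ρ ^ d - 1) ^ d = (ρ ^ d - 1) ^ (d-1) * (ρ ^ d - 1) := by
      rw [← pow_succ]; congr 1; omega
    have h2p : (-1:K) ^ (d-1) * (-1:K) ^ (d-1) = 1 := by
      rw [← pow_add]
      exact Even.neg_one_pow ⟨d-1, rfl⟩
    have hm1 : (-1:K) ^ (d-1) * (-1) = (-1) ^ d := by
      rw [← pow_succ]; congr 1; omega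
    calc A * (ρ ^ d - 1) ^ d
        = A * ((ρ ^ d - 1) ^ (d-1) * (ρ ^ d - 1)) := by rw [hdd]
      _ = ((-1:K) ^ (d-1) * (-1) ^ (d-1)) * (A * ((ρ ^ d - 1) ^ (d-1) * (ρ ^ d - 1))) := by
            rw [h2p, one_mul]
      _ = (-1) ^ (d-1) * ((-1) ^ (d-1) * (ρ ^ d - 1) ^ (d-1)) * (A * (ρ ^ d - 1)) := by ring
      _ = (-1) ^ (d-1) * (T₁ ^ (d-1) * (ρ ^ d - ρ) ^ (d-1)) * (A * (ρ ^ d - 1)) := by rw [e1p]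
      _ = (-1) ^ (d-1) * (ρ ^ d - ρ) ^ (d-1) * (A * T₁ ^ (d-1) * (ρ ^ d - 1)) := by ring
      _ = (-1) ^ (d-1) * (ρ ^ d - ρ) ^ (d-1) * (-(ρ - 1)) := by rw [e2]
      _ = ((-1) ^ (d-1) * (-1)) * (ρ - 1) * (ρ ^ d - ρ) ^ (d-1) := by ring
      _ = (-1) ^ d * (ρ - 1) * (ρ ^ d - ρ) ^ (d-1) := by rw [hm1]
  rw [eq_div_iff (pow_ne_zero _ hρd1)]
  exact key
end

section
/- Let q be a prime power with q ≡ 2 (mod 6). Then the number of A ∈ F_q \ {0} such that the polynomial A t³ + t + 1 has three distinct roots in F_q is exactly (q − 2)/6. -/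
section Aux
variable {F : Type*} [Field F]

-- From two distinct roots, A * (x²+xy+y²) = 1
lemma aux_two_roots (h2 : (2:F) = 0) {A x y : F}
    (hx : A * x ^ 3 + x + 1 = 0) (hy : A * y ^ 3 + y + 1 = 0) (hxy : x ≠ y) :
    A * (x ^ 2 + x * y + y ^ 2) = 1 := by
  have hxy' : x - y ≠ 0 := sub_ne_zero.mpr hxy
  have h : (x - y) * (A * (x ^ 2 + x * y + y ^ 2) - 1) = 0 := by
    linear_combination hx - hy + (y - x) * h2
  rcases mul_eq_zero.mp h with h | h
  · exact absurd h hxy'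
  · linear_combination h

-- roots give P-condition
lemma aux_P_of_roots (h2 : (2:F) = 0) {A x y : F} (hA : A ≠ 0)
    (hx : A * x ^ 3 + x + 1 = 0) (hy : A * y ^ 3 + y + 1 = 0) (hxy : x ≠ y) :
    x ^ 2 + x * y + y ^ 2 = x * y * (x + y) ∧ A * (x * y * (x + y)) = 1 := by
  have hs := aux_two_roots h2 hx hy hxy
  have h4 : A * (x * y * (x + y)) = 1 := by
    linear_combination x * hs - hx + x * h2
  refine ⟨?_, h4⟩
  exact mul_left_cancel₀ hA (by rw [hs, h4])

lemma aux_roots_of_P (h2 : (2:F) = 0) {x y : F} (hx0 : x ≠ 0) (hy0 : y ≠ 0)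
    (hxy : x ≠ y) (hP : x ^ 2 + x * y + y ^ 2 = x * y * (x + y)) :
    ∀ t : F, (x * y * (x + y))⁻¹ * t ^ 3 + t + 1 = 0 ↔ (t = x ∨ t = y ∨ t = x + y) := by
  have hz0 : x + y ≠ 0 := by
    intro h
    apply hxy
    have : y = -y := by linear_combination y * h2
    linear_combination h - this
  have hd : x * y * (x + y) ≠ 0 := by
    exact mul_ne_zero (mul_ne_zero hx0 hy0) hz0
  have hA : (x * y * (x + y))⁻¹ * (x * y * (x + y)) = 1 := inv_mul_cancel₀ hd
  set A := (x * y * (x + y))⁻¹ with hAdef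
  have hA0 : A ≠ 0 := inv_ne_zero hd
  have rx : A * x ^ 3 + x + 1 = 0 := by
    have key : (A * x ^ 3 + x + 1) * (x * y * (x + y)) = 0 := by
      linear_combination x ^ 3 * hA + x * hP + (x^3*y + x^2*y^2) * h2
    exact (mul_eq_zero.mp key).resolve_right hd
  have ry : A * y ^ 3 + y + 1 = 0 := by
    have key : (A * y ^ 3 + y + 1) * (x * y * (x + y)) = 0 := by
      linear_combination y ^ 3 * hA + y * hP + (x^2*y^2 + x*y^3) * h2
    exact (mul_eq_zero.mp key).resolve_right hd
  have rz : A * (x + y) ^ 3 + (x + y) + 1 = 0 := by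
    have key : (A * (x + y) ^ 3 + (x + y) + 1) * (x * y * (x + y)) = 0 := by
      linear_combination (x + y) ^ 3 * hA + (x + y) * hP + (x^2*y + x*y^2 + x^3*y + 2*x^2*y^2 + x*y^3) * h2
    exact (mul_eq_zero.mp key).resolve_right hd
  intro t
  constructor
  · intro ht
    by_cases htx : t = x
    · exact Or.inl htx
    have hs := aux_two_roots h2 ht rx htx
    have hs2 := aux_two_roots h2 rx ry hxy
    have : (t - y) * (t - (x + y)) = 0 := by
      have : A * ((t - y) * (t - (x + y))) = 0 := by
        linear_combination hs - hs2 + (A*(x*y + y^2 - t*x - t*y)) * h2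
      exact (mul_eq_zero.mp this).resolve_left hA0
    rcases mul_eq_zero.mp this with h | h
    · exact Or.inr (Or.inl (sub_eq_zero.mp h))
    · exact Or.inr (Or.inr (sub_eq_zero.mp h))
  · rintro (rfl | rfl | rfl) <;> assumption

end Aux

theorem stmt_17 (q : ℕ) (hq : IsPrimePow q) (hmod : q % 6 = 2)
    (F : Type*) [Field F] [Fintype F] (hF : Fintype.card F = q) :
    {A : F | A ≠ 0 ∧ {t : F | A * t ^ 3 + t + 1 = 0}.ncard = 3}.ncard = (q - 2) / 6 := by
  classical
  -- characteristic 2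
  have hq2 : 2 ≤ q := by omega
  have hchar : ringChar F = 2 := by
    obtain ⟨p, k, hp, hk, hpk⟩ := hq
    have hdvd : ringChar F ∣ q := by
      have : ((q : ℕ) : F) = 0 := by rw [← hF]; exact FiniteField.cast_card_eq_zero F
      exact ringChar.dvd this
    have hprime : (ringChar F).Prime := by
      have : CharP F (ringChar F) := ringChar.charP F
      exact CharP.char_is_prime F (ringChar F)
    have h2q : 2 ∣ q := by omega
    rw [← hpk] at hdvd h2q
    have h1 : ringChar F = p := (Nat.prime_dvd_prime_iff_eq hprime hp.nat_prime).mp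
      (hprime.dvd_of_dvd_pow hdvd)
    have h2 : 2 = p := (Nat.prime_dvd_prime_iff_eq Nat.prime_two hp.nat_prime).mp
      (Nat.prime_two.dvd_of_dvd_pow h2q)
    omega
  have h2 : (2 : F) = 0 := by
    have : CharP F 2 := hchar ▸ ringChar.charP F
    exact CharP.cast_eq_zero F 2
  -- no nontrivial cube roots of unity
  have hcube : ∀ r : F, r ^ 2 + r + 1 ≠ 0 := by
    intro r hr
    have hr0 : r ≠ 0 := by
      intro h; rw [h] at hr; simp at hr
    have hr1 : r ≠ 1 := by
      intro h; rw [h] at hr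
      have : (3 : F) = 0 := by linear_combination hr
      have : (1 : F) = 0 := by linear_combination this - h2
      simp at this
    have hr3 : r ^ 3 = 1 := by linear_combination (r - 1) * hr
    have hu : (Units.mk0 r hr0) ^ 3 = 1 := by
      ext; push_cast; exact hr3
    have hord : orderOf (Units.mk0 r hr0) ∣ 3 := orderOf_dvd_of_pow_eq_one hu
    have hord3 : orderOf (Units.mk0 r hr0) = 3 := by
      rcases (Nat.dvd_prime Nat.prime_three).mp hord with h | h
      · rw [orderOf_eq_one_iff] at h
        exact absurd (by simpa using congrArg Units.val h) hr1
      · exact h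
    have hdvd : 3 ∣ Fintype.card Fˣ := hord3 ▸ orderOf_dvd_card
    rw [Fintype.card_units, hF] at hdvd
    omega
  -- Finset versions
  set S : Finset F := Finset.univ.filter
    (fun A => A ≠ 0 ∧ {t : F | A * t ^ 3 + t + 1 = 0}.ncard = 3) with hSdef
  have hset : {A : F | A ≠ 0 ∧ {t : F | A * t ^ 3 + t + 1 = 0}.ncard = 3} = ↑S := by
    ext A; simp [hSdef]
  rw [hset, Set.ncard_coe_finset]
  set P : Finset (F × F) := Finset.univ.filter
    (fun p => p.1 ≠ 0 ∧ p.2 ≠ 0 ∧ p.1 ≠ p.2 ∧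
      p.1 ^ 2 + p.1 * p.2 + p.2 ^ 2 = p.1 * p.2 * (p.1 + p.2)) with hPdef
  set f : F × F → F := fun p => (p.1 * p.2 * (p.1 + p.2))⁻¹ with hfdef
  -- Step A : f maps P into S
  have stepA : ∀ p ∈ P, f p ∈ S := by
    rintro ⟨x, y⟩ hp
    rw [hPdef, Finset.mem_filter] at hp
    obtain ⟨-, hx0, hy0, hxy, hP⟩ := hp
    have hz0 : x + y ≠ 0 := by
      intro h
      apply hxy
      have : y = -y := by linear_combination y * h2
      linear_combination h - this
    have hd : x * y * (x + y) ≠ 0 := mul_ne_zero (mul_ne_zero hx0 hy0) hz0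
    have hroots := aux_roots_of_P h2 hx0 hy0 hxy hP
    rw [hSdef, Finset.mem_filter]
    refine ⟨Finset.mem_univ _, inv_ne_zero hd, ?_⟩
    have hne1 : x ≠ x + y := by
      intro h; exact hy0 (by linear_combination -h)
    have hne2 : y ≠ x + y := by
      intro h; exact hx0 (by linear_combination -h)
    rw [Set.ncard_eq_three]
    refine ⟨x, y, x + y, hxy, hne1, hne2, ?_⟩
    ext t
    simp only [Set.mem_setOf_eq, Set.mem_insert_iff, Set.mem_singleton_iff]
    have hfe : f (x, y) = (x * y * (x + y))⁻¹ := rfl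
    rw [hfe]
    exact hroots t
  -- Step B : fibers over S have 6 elements
  have stepB : ∀ A ∈ S, (P.filter (fun p => f p = A)).card = 6 := by
    intro A hA
    rw [hSdef, Finset.mem_filter] at hA
    obtain ⟨-, hA0, hA3⟩ := hA
    set R : Finset F := Finset.univ.filter (fun t => A * t ^ 3 + t + 1 = 0) with hRdef
    have hR3 : R.card = 3 := by
      have : {t : F | A * t ^ 3 + t + 1 = 0} = ↑R := by ext t; simp [hRdef]
      rw [this, Set.ncard_coe_finset] at hA3
      exact hA3
    have hfib : P.filter (fun p => f p = A) = R.offDiag := by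
      ext ⟨x, y⟩
      rw [Finset.mem_filter, Finset.mem_offDiag, hPdef, Finset.mem_filter]
      constructor
      · rintro ⟨⟨-, hx0, hy0, hxy, hP⟩, hfp⟩
        have hroots := aux_roots_of_P h2 hx0 hy0 hxy hP
        have hAeq : A = (x * y * (x + y))⁻¹ := hfp.symm
        refine ⟨?_, ?_, hxy⟩
        · rw [hRdef, Finset.mem_filter]
          exact ⟨Finset.mem_univ _, by rw [hAeq]; exact ((hroots x).mpr (Or.inl rfl))⟩
        · rw [hRdef, Finset.mem_filter]
          exact ⟨Finset.mem_univ _, by rw [hAeq]; exact ((hroots y).mpr (Or.inr (Or.inl rfl)))⟩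
      · rintro ⟨hx, hy, hxy⟩
        rw [hRdef, Finset.mem_filter] at hx hy
        have hx' := hx.2
        have hy' := hy.2
        have hroot0 : ∀ t : F, A * t ^ 3 + t + 1 = 0 → t ≠ 0 := by
          intro t ht ht0
          rw [ht0] at ht
          simp at ht
        have hx0 := hroot0 x hx'
        have hy0 := hroot0 y hy'
        obtain ⟨hP, hprod⟩ := aux_P_of_roots h2 hA0 hx' hy' hxy
        refine ⟨⟨Finset.mem_univ _, hx0, hy0, hxy, hP⟩, ?_⟩
        show (x * y * (x + y))⁻¹ = A
        exact inv_eq_of_mul_eq_one_left (by linear_combination hprod)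
    rw [hfib, Finset.offDiag_card, hR3]
  -- Step C : P.card = S.card * 6
  have stepC : P.card = S.card * 6 := by
    rw [Finset.card_eq_sum_card_fiberwise stepA, Finset.sum_congr rfl stepB,
      Finset.sum_const, smul_eq_mul]
  -- Step D : P.card = q - 2
  have stepD : P.card = q - 2 := by
    set Q : Finset F := Finset.univ.filter (fun ρ => ρ ≠ 0 ∧ ρ ≠ 1) with hQdef
    have hQcard : Q.card = q - 2 := by
      have hQ : Q = Finset.univ \ {0, 1} := by
        ext a
        simp [hQdef, not_or]
      rw [hQ, Finset.card_sdiff_of_subset (Finset.subset_univ _), Finset.card_univ, hF]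
      have : ({0, 1} : Finset F).card = 2 := by
        rw [Finset.card_insert_of_notMem (by simp), Finset.card_singleton]
      rw [this]
    rw [← hQcard]
    refine (Finset.card_bij (fun ρ _ =>
      ((ρ ^ 2 + ρ + 1) / (ρ ^ 2 + ρ), ρ * ((ρ ^ 2 + ρ + 1) / (ρ ^ 2 + ρ)))) ?_ ?_ ?_).symm
    · intro ρ hρ
      rw [hQdef, Finset.mem_filter] at hρ
      obtain ⟨-, hρ0, hρ1⟩ := hρ
      have hρ1' : ρ + 1 ≠ 0 := by
        intro h; exact hρ1 (by linear_combination h - h2)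
      have hD : ρ ^ 2 + ρ ≠ 0 := by
        intro h
        rcases mul_eq_zero.mp (show ρ * (ρ + 1) = 0 by linear_combination h) with h' | h'
        · exact hρ0 h'
        · exact hρ1' h'
      have hN : ρ ^ 2 + ρ + 1 ≠ 0 := hcube ρ
      set x := (ρ ^ 2 + ρ + 1) / (ρ ^ 2 + ρ) with hxdef
      have hx0 : x ≠ 0 := div_ne_zero hN hD
      have hxD : x * (ρ ^ 2 + ρ) = ρ ^ 2 + ρ + 1 := div_mul_cancel₀ _ hD
      rw [hPdef, Finset.mem_filter]
      refine ⟨Finset.mem_univ _, hx0, mul_ne_zero hρ0 hx0, ?_, ?_⟩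
      · intro h
        apply hρ1
        have : (ρ - 1) * x = 0 := by linear_combination -h
        rcases mul_eq_zero.mp this with h' | h'
        · linear_combination h'
        · exact absurd h' hx0
      · show x ^ 2 + x * (ρ * x) + (ρ * x) ^ 2 = x * (ρ * x) * (x + ρ * x)
        linear_combination (-x ^ 2) * hxD
    · intro ρ₁ h₁ ρ₂ h₂ heq
      rw [hQdef, Finset.mem_filter] at h₁ h₂
      have hN₁ : ρ₁ ^ 2 + ρ₁ + 1 ≠ 0 := hcube ρ₁
      have h1' : ρ₁ + 1 ≠ 0 := by
        intro h; exact h₁.2.2 (by linear_combination h - h2)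
      have hD₁ : ρ₁ ^ 2 + ρ₁ ≠ 0 := by
        intro h
        rcases mul_eq_zero.mp (show ρ₁ * (ρ₁ + 1) = 0 by linear_combination h) with h' | h'
        · exact h₁.2.1 h'
        · exact h1' h'
      have hx0 : (ρ₁ ^ 2 + ρ₁ + 1) / (ρ₁ ^ 2 + ρ₁) ≠ 0 := div_ne_zero hN₁ hD₁
      have e1 := congrArg Prod.fst heq
      have e2 := congrArg Prod.snd heq
      simp only at e1 e2
      rw [← e1] at e2
      exact mul_right_cancel₀ hx0 e2
    · rintro ⟨x, y⟩ hp
      rw [hPdef, Finset.mem_filter] at hp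
      obtain ⟨-, hx0, hy0, hxy, hP⟩ := hp
      refine ⟨y / x, ?_, ?_⟩
      · rw [hQdef, Finset.mem_filter]
        refine ⟨Finset.mem_univ _, div_ne_zero hy0 hx0, ?_⟩
        intro h
        exact hxy ((div_eq_one_iff_eq hx0).mp h).symm
      · set ρ := y / x with hρdef
        have hyx : ρ * x = y := div_mul_cancel₀ _ hx0
        have hN : ρ ^ 2 + ρ + 1 ≠ 0 := hcube ρ
        have hρ0 : ρ ≠ 0 := div_ne_zero hy0 hx0
        have hρ1 : ρ ≠ 1 := by
          intro h
          exact hxy ((div_eq_one_iff_eq hx0).mp (hρdef ▸ h)).symm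
        have h1' : ρ + 1 ≠ 0 := by
          intro h; exact hρ1 (by linear_combination h - h2)
        have hD : ρ ^ 2 + ρ ≠ 0 := by
          intro h
          rcases mul_eq_zero.mp (show ρ * (ρ + 1) = 0 by linear_combination h) with h' | h'
          · exact hρ0 h'
          · exact h1' h'
        have key : x ^ 2 * (x * (ρ ^ 2 + ρ) - (ρ ^ 2 + ρ + 1)) = 0 := by
          rw [← hyx] at hP
          linear_combination -hP
        have hxval : x * (ρ ^ 2 + ρ) = ρ ^ 2 + ρ + 1 := by
          rcases mul_eq_zero.mp key with h | h
          · exact absurd (pow_eq_zero_iff (n := 2) (by norm_num) |>.mp h) hx0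
          · linear_combination h
        have hx : (ρ ^ 2 + ρ + 1) / (ρ ^ 2 + ρ) = x := by
          rw [div_eq_iff hD]
          linear_combination -hxval
        show ((ρ ^ 2 + ρ + 1) / (ρ ^ 2 + ρ), ρ * ((ρ ^ 2 + ρ + 1) / (ρ ^ 2 + ρ))) = (x, y)
        rw [hx, hyx]
  omega
end

section
/- Let K be a field, d ≥ 3, A ∈ K nonzero, and let T₁, T₂ ∈ K be two distinct roots of A t^d + t + 1 with ρ = T₂/T₁. Then any further root T₃ of A t^d + t + 1 with T₃ ∉ {T₁, T₂} yields σ = T₃/T₁ satisfying Σ_{i=0}^{d−2} σ^{d−2−i} (Σ_{j=0}^{i} ρ^j) = 0. -/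
theorem stmt_18 (K : Type*) [Field K] (d : ℕ) (hd : 3 ≤ d) (A : K) (hA : A ≠ 0)
    (T₁ T₂ T₃ : K)
    (h1 : A * T₁ ^ d + T₁ + 1 = 0) (h2 : A * T₂ ^ d + T₂ + 1 = 0)
    (h3 : A * T₃ ^ d + T₃ + 1 = 0)
    (h12 : T₁ ≠ T₂) (h13 : T₃ ≠ T₁) (h23 : T₃ ≠ T₂) :
    ∑ i ∈ Finset.range (d - 1),
        (T₃ / T₁) ^ (d - 2 - i) * (∑ j ∈ Finset.range (i + 1), (T₂ / T₁) ^ j) = 0 := by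
  obtain ⟨n, rfl⟩ : ∃ n, d = n + 2 := ⟨d - 2, by omega⟩
  have hT1 : T₁ ≠ 0 := by rintro rfl; simp at h1
  have hT2 : T₂ ≠ 0 := by rintro rfl; simp at h2
  have hT3 : T₃ ≠ 0 := by rintro rfl; simp at h3
  set ρ := T₂ / T₁ with hρdef
  set σ := T₃ / T₁ with hσdef
  have hρ1 : ρ ≠ 1 := by
    intro h
    exact h12 ((div_eq_one_iff_eq hT1).mp h).symm
  have hσ1 : σ ≠ 1 := by
    intro h
    exact h13 ((div_eq_one_iff_eq hT1).mp h)
  have hρσ : ρ ≠ σ := by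
    intro h
    rw [div_eq_div_iff hT1 hT1] at h
    exact h23 (mul_right_cancel₀ hT1 h).symm
  have p1 : T₁ + 1 ≠ 0 := by
    intro h
    apply hT1
    have : A * T₁ ^ (n + 2) = 0 := by linear_combination h1 - h
    rcases mul_eq_zero.mp this with h' | h'
    · exact absurd h' hA
    · exact pow_eq_zero_iff (by omega) |>.mp h'
  have p2 : T₂ + 1 ≠ 0 := by
    intro h
    apply hT2
    have : A * T₂ ^ (n + 2) = 0 := by linear_combination h2 - h
    rcases mul_eq_zero.mp this with h' | h'
    · exact absurd h' hA
    · exact pow_eq_zero_iff (by omega) |>.mp h'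
  have p3 : T₃ + 1 ≠ 0 := by
    intro h
    apply hT3
    have : A * T₃ ^ (n + 2) = 0 := by linear_combination h3 - h
    rcases mul_eq_zero.mp this with h' | h'
    · exact absurd h' hA
    · exact pow_eq_zero_iff (by omega) |>.mp h'
  -- explicit formulas for the (n+1)-st powers
  have e1 : T₁ ^ (n + 1) = -(T₁ + 1) / (A * T₁) := by
    field_simp
    linear_combination h1
  have e2 : T₂ ^ (n + 1) = -(T₂ + 1) / (A * T₂) := by
    field_simp
    linear_combination h2
  have e3 : T₃ ^ (n + 1) = -(T₃ + 1) / (A * T₃) := by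
    field_simp
    linear_combination h3
  have zkey : T₂ * (T₂ ^ (n + 1) - T₃ ^ (n + 1)) * (T₃ - T₁)
      - T₁ * (T₃ ^ (n + 1) - T₁ ^ (n + 1)) * (T₂ - T₃) = 0 := by
    have hmul : A * T₁ * T₂ * T₃ ≠ 0 :=
      mul_ne_zero (mul_ne_zero (mul_ne_zero hA hT1) hT2) hT3
    apply mul_left_cancel₀ hmul
    rw [mul_zero]
    linear_combination (T₁ * T₂ * T₃ * (T₂ - T₃)) * h1
      + (T₁ * T₂ * T₃ * (T₃ - T₁)) * h2
      + (-(T₁ * T₂ * (T₂ * (T₃ - T₁) + T₁ * (T₂ - T₃)))) * h3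
  have key : ρ * (ρ ^ (n + 1) - σ ^ (n + 1)) * (σ - 1)
      - (σ ^ (n + 1) - 1) * (ρ - σ) = 0 := by
    have h0 : (T₁ : K) ^ (n + 3) ≠ 0 := pow_ne_zero _ hT1
    apply mul_left_cancel₀ h0
    rw [mul_zero]
    have m1 : T₁ * ρ = T₂ := by rw [hρdef]; field_simp
    have m2 : T₁ * σ = T₃ := by rw [hσdef]; field_simp
    have expand : T₁ ^ (n + 3) * (ρ * (ρ ^ (n + 1) - σ ^ (n + 1)) * (σ - 1)
        - (σ ^ (n + 1) - 1) * (ρ - σ))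
        = (T₁ * ρ) * ((T₁ * ρ) ^ (n + 1) - (T₁ * σ) ^ (n + 1)) * (T₁ * σ - T₁)
          - ((T₁ * σ) ^ (n + 1) - T₁ ^ (n + 1)) * ((T₁ * ρ - T₁ * σ) * T₁) := by
      ring
    rw [expand, m1, m2]
    linear_combination zkey
  have g1 : (∑ i ∈ Finset.range (n + 1), ρ ^ i * σ ^ (n - i)) * (ρ - σ)
      = ρ ^ (n + 1) - σ ^ (n + 1) := by
    have := geom_sum₂_mul ρ σ (n + 1)
    simpa using this
  have g2 : (∑ i ∈ Finset.range (n + 1), σ ^ i) * (σ - 1) = σ ^ (n + 1) - 1 :=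
    geom_sum_mul σ (n + 1)
  have g3 : ∑ i ∈ Finset.range (n + 1), σ ^ (n - i)
      = ∑ i ∈ Finset.range (n + 1), σ ^ i := by
    have := Finset.sum_range_reflect (fun i => σ ^ i) (n + 1)
    simpa using this
  have split : ∑ i ∈ Finset.range (n + 1), σ ^ (n - i) * (ρ ^ (i + 1) - 1)
      = ρ * (∑ i ∈ Finset.range (n + 1), ρ ^ i * σ ^ (n - i))
        - ∑ i ∈ Finset.range (n + 1), σ ^ (n - i) := by
    rw [Finset.mul_sum, ← Finset.sum_sub_distrib]
    exact Finset.sum_congr rfl fun i _ => by ring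
  have step1 : (∑ i ∈ Finset.range (n + 1),
      σ ^ (n - i) * (∑ j ∈ Finset.range (i + 1), ρ ^ j)) * (ρ - 1)
      = ∑ i ∈ Finset.range (n + 1), σ ^ (n - i) * (ρ ^ (i + 1) - 1) := by
    rw [Finset.sum_mul]
    exact Finset.sum_congr rfl fun i _ => by rw [mul_assoc, geom_sum_mul]
  have main : (∑ i ∈ Finset.range (n + 1),
      σ ^ (n - i) * (∑ j ∈ Finset.range (i + 1), ρ ^ j))
      * ((ρ - 1) * ((ρ - σ) * (σ - 1))) = 0 := by
    calc (∑ i ∈ Finset.range (n + 1),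
          σ ^ (n - i) * (∑ j ∈ Finset.range (i + 1), ρ ^ j))
          * ((ρ - 1) * ((ρ - σ) * (σ - 1)))
        = ((∑ i ∈ Finset.range (n + 1),
            σ ^ (n - i) * (∑ j ∈ Finset.range (i + 1), ρ ^ j)) * (ρ - 1))
            * ((ρ - σ) * (σ - 1)) := by ring
      _ = (∑ i ∈ Finset.range (n + 1), σ ^ (n - i) * (ρ ^ (i + 1) - 1))
            * ((ρ - σ) * (σ - 1)) := by rw [step1]
      _ = (ρ * (∑ i ∈ Finset.range (n + 1), ρ ^ i * σ ^ (n - i))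
            - ∑ i ∈ Finset.range (n + 1), σ ^ (n - i)) * ((ρ - σ) * (σ - 1)) := by
          rw [split]
      _ = ρ * ((∑ i ∈ Finset.range (n + 1), ρ ^ i * σ ^ (n - i)) * (ρ - σ)) * (σ - 1)
            - ((∑ i ∈ Finset.range (n + 1), σ ^ i) * (σ - 1)) * (ρ - σ) := by
          rw [g3]; ring
      _ = ρ * (ρ ^ (n + 1) - σ ^ (n + 1)) * (σ - 1) - (σ ^ (n + 1) - 1) * (ρ - σ) := by
          rw [g1, g2]
      _ = 0 := key
  have hfac : (ρ - 1) * ((ρ - σ) * (σ - 1)) ≠ 0 :=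
    mul_ne_zero (sub_ne_zero.mpr hρ1)
      (mul_ne_zero (sub_ne_zero.mpr hρσ) (sub_ne_zero.mpr hσ1))
  have := (mul_eq_zero.mp main).resolve_right hfac
  convert this using 2
  all_goals simp
end
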